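/- arXiv:1602.06605 — 3 statements merged into one kernel-verified Lean document; each statement's English description precedes it below -/
import Mathlib

section
/- Under condition (A) as above, the functional λ(ψ) = ∫_X (1/δ) E_v ∫_{τ(v)}^{τ(v)+δ} ψ(u_t) dt μ(dv) is continuous from b₀(X) to ℝ: if ψ_n b-converges to ψ (uniformly bounded, uniformly convergent on bounded sets), then λ(ψ_n) → λ(ψ). -/
open MeasureTheory Filter Topology Bornology
open scoped ENNReal

/-!
Taking `B = {x}` shows that b-convergence implies pointwise convergence. All three nested
integrands are uniformly bounded and integrated against finite measures, so the bounded
convergence theorem can be applied successively in `t`, `ω` and `v`; joint measurability of `u`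
and `τ` makes each partial integral measurable in the remaining variables.
-/

theorem tendsto_integral_of_forall_norm_le_const {α E ι : Type*} [MeasurableSpace α]
    [NormedAddCommGroup E] [NormedSpace ℝ E] {μ : Measure α} [IsFiniteMeasure μ]
    {l : Filter ι} [l.IsCountablyGenerated] {F : ι → α → E} {f : α → E} {C : ℝ}
    (hF_meas : ∀ n, AEStronglyMeasurable (F n) μ) (h_bound : ∀ n a, ‖F n a‖ ≤ C)
    (h_lim : ∀ a, Tendsto (fun n => F n a) l (𝓝 (f a))) :
    Tendsto (fun n => ∫ a, F n a ∂μ) l (𝓝 (∫ a, f a ∂μ)) :=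
  tendsto_integral_filter_of_dominated_convergence (fun _ => C) (.of_forall hF_meas)
    (.of_forall fun n => .of_forall (h_bound n)) (integrable_const C) (.of_forall h_lim)

theorem norm_setIntegral_Icc_add_le {E : Type*} [NormedAddCommGroup E] [NormedSpace ℝ E]
    {f : ℝ → E} {C : ℝ} (hf : ∀ t, ‖f t‖ ≤ C) (a δ : ℝ) :
    ‖∫ t in Set.Icc a (a + δ), f t‖ ≤ C * max δ 0 := by
  simpa using norm_integral_le_of_norm_le_const (μ := volume.restrict (Set.Icc a (a + δ)))
    (.of_forall hf)

theorem stronglyMeasurable_setIntegral_Icc {α : Type*} [MeasurableSpace α] {g : α → ℝ → ℝ}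
    (hg : Measurable (Function.uncurry g)) {a b : α → ℝ} (ha : Measurable a)
    (hb : Measurable b) :
    StronglyMeasurable fun x => ∫ t in Set.Icc (a x) (b x), g x t := by
  have hS : MeasurableSet {p : α × ℝ | a p.1 ≤ p.2 ∧ p.2 ≤ b p.1} :=
    (measurableSet_le (ha.comp measurable_fst) measurable_snd).inter
      (measurableSet_le measurable_snd (hb.comp measurable_fst))
  have hIcc : (fun x => ∫ t in Set.Icc (a x) (b x), g x t) = fun x =>
      ∫ t, {p : α × ℝ | a p.1 ≤ p.2 ∧ p.2 ≤ b p.1}.indicator (Function.uncurry g) (x, t) := by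
    funext x
    rw [← integral_indicator measurableSet_Icc]
    rfl
  rw [hIcc]
  exact (hg.indicator hS).stronglyMeasurable.integral_prod_right'

theorem tendsto_apply_of_forall_isBounded {X : Type*} [Bornology X] {F : ℕ → X → ℝ}
    {f : X → ℝ}
    (h : ∀ B : Set X, IsBounded B → ∀ η > (0:ℝ), ∃ N, ∀ n ≥ N, ∀ v ∈ B, |F n v - f v| ≤ η)
    (x : X) : Tendsto (fun n => F n x) atTop (𝓝 (f x)) := by
  refine Metric.tendsto_atTop.2 fun ε hε => ?_
  obtain ⟨N, hN⟩ := h {x} isBounded_singleton (ε / 2) (half_pos hε)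
  exact ⟨N, fun n hn => (hN n hn x rfl).trans_lt (half_lt_self hε)⟩

theorem stmt9_general
    {X : Type*} [MetricSpace X]
    [MeasurableSpace X]
    {Ω : Type*} {mΩ : MeasurableSpace Ω} (P : Measure Ω) [IsProbabilityMeasure P]
    (u : ℝ → X → Ω → X)
    (hu : Measurable fun p : Ω × ℝ × X => u p.2.1 p.2.2 p.1)
    (τ : X → Ω → ℝ)
    (hτmeas : Measurable fun p : Ω × X => τ p.2 p.1)
    (μ : Measure X) [IsProbabilityMeasure μ]
    (δ : ℝ)
    (ψn : ℕ → X → ℝ) (ψ : X → ℝ)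
    (hψnmeas : ∀ n, Measurable (ψn n))
    -- b-convergence of `ψ_n` to `ψ`
    (hbdd : ∃ C : ℝ, ∀ n v, |ψn n v| ≤ C)
    (hbconv : ∀ B : Set X, IsBounded B → ∀ η > (0:ℝ),
      ∃ N, ∀ n ≥ N, ∀ v ∈ B, |ψn n v - ψ v| ≤ η) :
    Filter.Tendsto
      (fun n => (1 / δ) * ∫ v, (∫ ω,
        (∫ t in Set.Icc (τ v ω) (τ v ω + δ), ψn n (u t v ω)) ∂P) ∂μ)
      atTop
      (𝓝 ((1 / δ) * ∫ v, (∫ ω,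
        (∫ t in Set.Icc (τ v ω) (τ v ω + δ), ψ (u t v ω)) ∂P) ∂μ)) := by
  obtain ⟨C, hC⟩ := hbdd
  have hpt := tendsto_apply_of_forall_isBounded hbconv
  have hτ : Measurable fun p : X × Ω => τ p.1 p.2 := hτmeas.comp measurable_swap
  have hu' : Measurable fun q : (X × Ω) × ℝ => u q.2 q.1.1 q.1.2 :=
    hu.comp (by fun_prop : Measurable fun q : (X × Ω) × ℝ => (q.1.2, q.2, q.1.1))
  have hmeas : ∀ n, StronglyMeasurable fun p : X × Ω =>
      ∫ t in Set.Icc (τ p.1 p.2) (τ p.1 p.2 + δ), ψn n (u t p.1 p.2) := fun n =>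
    stronglyMeasurable_setIntegral_Icc (g := fun p t => ψn n (u t p.1 p.2))
      ((hψnmeas n).comp hu') hτ (hτ.add_const δ)
  have hinner_le : ∀ n v ω,
      ‖∫ t in Set.Icc (τ v ω) (τ v ω + δ), ψn n (u t v ω)‖ ≤ C * max δ 0 := fun n v ω =>
    norm_setIntegral_Icc_add_le (fun t => hC n _) _ δ
  have hinner : ∀ v ω, Tendsto (fun n => ∫ t in Set.Icc (τ v ω) (τ v ω + δ), ψn n (u t v ω))
      atTop (𝓝 (∫ t in Set.Icc (τ v ω) (τ v ω + δ), ψ (u t v ω))) := fun v ω =>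
    tendsto_integral_of_forall_norm_le_const
      (fun n => ((hψnmeas n).comp
        (hu'.comp (measurable_prodMk_left (x := (v, ω))))).aestronglyMeasurable)
      (fun n t => hC n _) (fun t => hpt _)
  have hmiddle : ∀ v, Tendsto
      (fun n => ∫ ω, (∫ t in Set.Icc (τ v ω) (τ v ω + δ), ψn n (u t v ω)) ∂P)
      atTop (𝓝 (∫ ω, (∫ t in Set.Icc (τ v ω) (τ v ω + δ), ψ (u t v ω)) ∂P)) := fun v =>
    tendsto_integral_of_forall_norm_le_const
      (fun n => ((hmeas n).comp_measurable measurable_prodMk_left).aestronglyMeasurable)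
      (hinner_le · v) (hinner v)
  have hmiddle_le : ∀ n v,
      ‖∫ ω, (∫ t in Set.Icc (τ v ω) (τ v ω + δ), ψn n (u t v ω)) ∂P‖ ≤ C * max δ 0 := by
    intro n v
    simpa using norm_integral_le_of_norm_le_const (μ := P) (.of_forall (hinner_le n v))
  exact (tendsto_integral_of_forall_norm_le_const
    (fun n => (hmeas n).integral_prod_right'.aestronglyMeasurable) hmiddle_le hmiddle).const_mul _

/-- Under condition (A), the functional
`λ(ψ) = ∫ (1/δ) E_v ∫_{τ(v)}^{τ(v)+δ} ψ(u_t) dt dμ(v)` is continuous from `b₀(X)` to `ℝ`: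
if `ψ_n` b-converges to `ψ` then `λ(ψ_n) → λ(ψ)`. -/
theorem stmt9
    {X : Type*} [MetricSpace X] [TopologicalSpace.SeparableSpace X] [CompleteSpace X]
    [MeasurableSpace X] [BorelSpace X]
    {Ω : Type*} {mΩ : MeasurableSpace Ω} (P : Measure Ω) [IsProbabilityMeasure P]
    (u : ℝ → X → Ω → X)
    (hu : Measurable fun p : Ω × ℝ × X => u p.2.1 p.2.2 p.1)
    (τ : X → Ω → ℝ)
    (hτ0 : ∀ v ω, 0 ≤ τ v ω)
    (hτmeas : Measurable fun p : Ω × X => τ p.2 p.1)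
    -- (0.75): stopping times are uniformly a.s. finite on compacts
    (hτfin : ∀ K : Set X, IsCompact K → ∀ η > (0:ℝ), ∃ s0 : ℝ, ∀ s ≥ s0, ∀ v ∈ K,
      P {ω | s ≤ τ v ω} ≤ ENNReal.ofReal η)
    -- (0.74): trajectories starting in a compact set stay in a bounded set
    (htraj : ∀ K : Set X, IsCompact K → ∀ T > (0:ℝ), ∀ η > (0:ℝ), ∃ B : Set X,
      IsBounded B ∧ ∀ v ∈ K,
        (1 : ℝ≥0∞) - ENNReal.ofReal η ≤ P {ω | ∀ t ∈ Set.Icc 0 T, u t v ω ∈ B})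
    (μ : Measure X) [IsProbabilityMeasure μ]
    (δ : ℝ) (hδ : 0 < δ)
    (ψn : ℕ → X → ℝ) (ψ : X → ℝ)
    (hψnmeas : ∀ n, Measurable (ψn n)) (hψmeas : Measurable ψ)
    (hψbdd : ∃ C, ∀ x, |ψ x| ≤ C)
    -- b-convergence of `ψ_n` to `ψ`
    (hbdd : ∃ C : ℝ, ∀ n v, |ψn n v| ≤ C)
    (hbconv : ∀ B : Set X, IsBounded B → ∀ η > (0:ℝ),
      ∃ N, ∀ n ≥ N, ∀ v ∈ B, |ψn n v - ψ v| ≤ η) :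
    Filter.Tendsto
      (fun n => (1 / δ) * ∫ v, (∫ ω,
        (∫ t in Set.Icc (τ v ω) (τ v ω + δ), ψn n (u t v ω)) ∂P) ∂μ)
      atTop
      (𝓝 ((1 / δ) * ∫ v, (∫ ω,
        (∫ t in Set.Icc (τ v ω) (τ v ω + δ), ψ (u t v ω)) ∂P) ∂μ)) :=
  stmt9_general (mΩ := mΩ) P u hu τ hτmeas μ δ ψn ψ hψnmeas hbdd hbconv
end

section
/- Let S(t) be a continuous semigroup on a metric space H possessing a compact global attractor A (meaning: A is compact, invariant, and for every bounded set B, sup_{v∈B} dist(S(t)v, A) → 0 as t → ∞). Let O be the set of ω-limit points of S(t) (u ∈ O iff there exist u₀ ∈ H and t_k → ∞ with S(t_k)u₀ → u). Then for every η > 0 and every bounded set B ⊆ H, sup_{v∈B} τ_η(v) < ∞, where τ_η(v) is the first instant when S(t)v enters the closed η-neighborhood of O. -/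
open MeasureTheory Filter Topology Bornology Metric

/-- Subsequence extraction: a sequence whose distance to a nonempty compact set tends to zero
has a subsequence converging to a point of the set. -/
lemma aux_subseq {H : Type*} [MetricSpace H] {A : Set H} (hAcomp : IsCompact A)
    (hAne : A.Nonempty) (x : ℕ → H)
    (hx : Filter.Tendsto (fun n => infDist (x n) A) atTop (𝓝 0)) :
    ∃ w ∈ A, ∃ φ : ℕ → ℕ, StrictMono φ ∧ Filter.Tendsto (x ∘ φ) atTop (𝓝 w) := by
  choose a ha hd using fun n => hAcomp.exists_infDist_eq_dist hAne (x n)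
  obtain ⟨w, hwA, φ, hφ, hconv⟩ := hAcomp.tendsto_subseq ha
  refine ⟨w, hwA, φ, hφ, ?_⟩
  rw [tendsto_iff_dist_tendsto_zero]
  have hda : Filter.Tendsto (fun n => dist (x n) (a n)) atTop (𝓝 0) := by
    simpa [hd] using hx
  have h1 : Filter.Tendsto (fun k => dist (x (φ k)) (a (φ k)) + dist (a (φ k)) w)
      atTop (𝓝 0) := by
    have := (hda.comp hφ.tendsto_atTop).add (tendsto_iff_dist_tendsto_zero.mp hconv)
    simpa using this
  refine squeeze_zero (fun k => dist_nonneg) (fun k => ?_) h1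
  exact dist_triangle _ _ _

/-- For a continuous semigroup with a compact global attractor, the hitting time of the closed
`η`-neighborhood of the set `O` of `ω`-limit points is bounded uniformly on bounded sets. -/
theorem stmt11
    {H : Type*} [MetricSpace H]
    (S : ℝ → H → H)
    (hS0 : ∀ v, S 0 v = v)
    (hSadd : ∀ s ≥ (0:ℝ), ∀ t ≥ (0:ℝ), ∀ v, S (s + t) v = S s (S t v))
    (hScont : Continuous fun p : ℝ × H => S p.1 p.2)
    (A : Set H) (hAcomp : IsCompact A) (hAne : A.Nonempty)
    (hAinv : ∀ t ≥ (0:ℝ), S t '' A = A)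
    (hAattr : ∀ B : Set H, IsBounded B → ∀ ε > (0:ℝ), ∃ T : ℝ, ∀ t ≥ T, ∀ v ∈ B,
      infDist (S t v) A ≤ ε)
    (O : Set H)
    (hO : O = {u : H | ∃ u₀ : H, ∃ tk : ℕ → ℝ, Filter.Tendsto tk atTop atTop ∧
      Filter.Tendsto (fun k => S (tk k) u₀) atTop (𝓝 u)}) :
    ∀ η > (0:ℝ), ∀ B : Set H, IsBounded B → ∃ T : ℝ, 0 ≤ T ∧ ∀ v ∈ B,
      ∃ t : ℝ, 0 ≤ t ∧ t ≤ T ∧ infDist (S t v) O ≤ η := by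
  intro η hη B hB
  by_contra hcon
  push_neg at hcon
  -- For each m, a point v m ∈ B avoiding the η-neighborhood of O on [0, 2m].
  have h' : ∀ m : ℕ, ∃ v ∈ B, ∀ t, 0 ≤ t → t ≤ 2 * (m:ℝ) → η < infDist (S t v) O := by
    intro m
    obtain ⟨v, hvB, hv⟩ := hcon (2 * (m:ℝ)) (by positivity)
    exact ⟨v, hvB, fun t ht htm => hv t ht htm⟩
  choose v hvB hv using h'
  set x : ℕ → H := fun m => S (m:ℝ) (v m) with hxdef
  -- x m approaches A
  have hxA : Filter.Tendsto (fun m => infDist (x m) A) atTop (𝓝 0) := by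
    rw [Metric.tendsto_atTop]
    intro ε hε
    obtain ⟨T, hT⟩ := hAattr B hB (ε/2) (by positivity)
    obtain ⟨N, hN⟩ := exists_nat_ge T
    refine ⟨N, fun m hm => ?_⟩
    have : infDist (x m) A ≤ ε/2 :=
      hT (m:ℝ) (le_trans hN (by exact_mod_cast hm)) (v m) (hvB m)
    rw [Real.dist_eq, sub_zero, abs_of_nonneg infDist_nonneg]
    linarith
  obtain ⟨w, hwA, φ, hφ, hconv⟩ := aux_subseq hAcomp hAne x hxA
  -- Forward orbit of w stays in A
  have horb : ∀ n : ℕ, S (n:ℝ) w ∈ A := by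
    intro n
    have := hAinv (n:ℝ) (by positivity)
    rw [← this]
    exact Set.mem_image_of_mem _ hwA
  -- Extract a subsequence of the orbit of w converging to some z ∈ A; z ∈ O.
  obtain ⟨z, hzA, ψ, hψ, hzconv⟩ := hAcomp.tendsto_subseq horb
  have hzO : z ∈ O := by
    rw [hO]
    refine ⟨w, fun n => ((ψ n : ℕ) : ℝ), ?_, hzconv⟩
    exact tendsto_natCast_atTop_atTop.comp hψ.tendsto_atTop
  -- Pick s = ψ k₀ with S s w within η/2 of z
  have : ∀ᶠ k in atTop, dist (S ((ψ k : ℕ):ℝ) w) z ≤ η / 2 := by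
    have := Metric.tendsto_atTop.mp hzconv (η/2) (by positivity)
    obtain ⟨N, hN⟩ := this
    exact eventually_atTop.mpr ⟨N, fun k hk => (hN k hk).le⟩
  obtain ⟨k₀, hk₀⟩ := this.exists
  set s : ℝ := ((ψ k₀ : ℕ) : ℝ) with hsdef
  have hs0 : 0 ≤ s := by positivity
  have hsw : infDist (S s w) O ≤ η / 2 :=
    le_trans (infDist_le_dist_of_mem hzO) hk₀
  -- Continuity of S s
  have hcontS : Continuous fun u : H => S s u := hScont.comp (Continuous.prodMk_right s)
  have htend : Filter.Tendsto (fun k => infDist (S s (x (φ k))) O) atTop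
      (𝓝 (infDist (S s w) O)) :=
    ((continuous_infDist_pt O).tendsto _).comp ((hcontS.tendsto w).comp hconv)
  have hlt : ∀ᶠ k in atTop, infDist (S s (x (φ k))) O < η :=
    htend.eventually_lt_const (lt_of_le_of_lt hsw (by linarith))
  have hge : ∀ᶠ k in atTop, s ≤ ((φ k : ℕ) : ℝ) := by
    have : Filter.Tendsto (fun k => ((φ k : ℕ) : ℝ)) atTop atTop :=
      tendsto_natCast_atTop_atTop.comp hφ.tendsto_atTop
    exact this.eventually_ge_atTop s
  obtain ⟨k, hk1, hk2⟩ := (hlt.and hge).exists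
  -- Semigroup identity
  have hEq : S s (x (φ k)) = S (s + (φ k : ℝ)) (v (φ k)) :=
    (hSadd s hs0 ((φ k : ℕ) : ℝ) (by positivity) (v (φ k))).symm
  have hbig : η < infDist (S (s + ((φ k : ℕ):ℝ)) (v (φ k))) O :=
    hv (φ k) _ (by positivity) (by linarith)
  rw [hEq] at hk1
  linarith
end

section
/- Let S(t) be a semigroup on a Banach space H with global attractor A, and suppose that for every R > 0 and every perturbation bound, controlled trajectories satisfy: if J_t(φ) ≤ e^{−m²} then ‖S^φ(t)u₀ − S(t)u₀‖² ≤ C_R e^{ct} J_t(φ) for u₀ in the ball B_R. Then for every R > 0 and η > 0 there exists T > 0 such that inf{I_T(u·) : u· ∈ C(0,T;H), u(0) ∈ B_R, u(T) ∉ A_η} > 0, where I_T is the energy of the controlled trajectory and A_η is the open η-neighborhood of A. -/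
open MeasureTheory Filter Topology Metric

/-- Energy inequality: if controlled trajectories stay close to uncontrolled ones in terms of
their energy, then for every `R, η > 0` there is a time `T > 0` such that the minimal energy
needed to go from `B_R` outside the `η`-neighborhood of the global attractor `A` in time `T`
is positive. -/
theorem stmt18
    {H : Type*} [NormedAddCommGroup H] [NormedSpace ℝ H]
    (S : ℝ → H → H)
    (A : Set H) (hAne : A.Nonempty)
    -- `A` attracts bounded sets uniformly
    (hattr : ∀ R > (0:ℝ), ∀ ε > (0:ℝ), ∃ T : ℝ, 0 < T ∧ ∀ t ≥ T, ∀ u₀ : H, ‖u₀‖ ≤ R →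
      infDist (S t u₀) A ≤ ε)
    -- energy of a (controlled) trajectory on `[0, T]`; `I T u = +∞` is modelled by large values
    (I : ℝ → (ℝ → H) → ℝ)
    (hInonneg : ∀ T u, 0 ≤ I T u)
    -- perturbation estimate: controlled trajectories with small energy stay close to the
    -- uncontrolled flow issued from the same initial point
    (hpert : ∀ R > (0:ℝ), ∃ CR c : ℝ, 0 ≤ CR ∧ ∀ u : ℝ → H, ∀ t ≥ (0:ℝ), ‖u 0‖ ≤ R →
      ‖u t - S t (u 0)‖ ^ 2 ≤ CR * Real.exp (c * t) * I t u) :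
    ∀ R > (0:ℝ), ∀ η > (0:ℝ), ∃ T > (0:ℝ), ∃ a > (0:ℝ), ∀ u : ℝ → H,
      ‖u 0‖ ≤ R → η ≤ infDist (u T) A → a ≤ I T u := by
  intro R hR η hη
  obtain ⟨T, hT0, hT⟩ := hattr R hR (η / 2) (by linarith)
  obtain ⟨CR, c, hCR, hp⟩ := hpert R hR
  set D : ℝ := CR * Real.exp (c * T) + 1 with hD
  have hDpos : 0 < D := by positivity
  refine ⟨T, hT0, (η / 2) ^ 2 / D, by positivity, fun u hu0 hfar => ?_⟩
  have h1 : infDist (S T (u 0)) A ≤ η / 2 := hT T le_rfl (u 0) hu0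
  have h2 : infDist (u T) A ≤ infDist (S T (u 0)) A + dist (u T) (S T (u 0)) :=
    infDist_le_infDist_add_dist
  have h3 : η / 2 ≤ ‖u T - S T (u 0)‖ := by
    rw [dist_eq_norm] at h2; linarith
  have h4 : (η / 2) ^ 2 ≤ ‖u T - S T (u 0)‖ ^ 2 := by
    have := pow_le_pow_left₀ (by linarith) h3 2
    simpa using this
  have h5 : ‖u T - S T (u 0)‖ ^ 2 ≤ CR * Real.exp (c * T) * I T u :=
    hp u T hT0.le hu0
  have h6 : CR * Real.exp (c * T) * I T u ≤ D * I T u := by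
    have : CR * Real.exp (c * T) ≤ D := by simp [hD]
    exact mul_le_mul_of_nonneg_right this (hInonneg T u)
  rw [div_le_iff₀ hDpos]
  calc (η / 2) ^ 2 ≤ D * I T u := le_trans h4 (le_trans h5 h6)
    _ = I T u * D := mul_comm _ _
end
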